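/- arXiv:1010.5605 — 7 statements merged into one kernel-verified Lean document; each statement's English description precedes it below -/
import Mathlib

section
/- For random variables X and Y with finite means and finite E[X·1{Y>y}], the covariance Cov[X, 1{Y>y}] equals the integral over x of Cov[1{X>x}, 1{Y>y}] dx. -/
/-!
Write `a = ∫ (1{a > x} - 1{0 > x}) dx` for every real `a`. Substituting `a = X` and multiplying
by the centred indicator `Z = 1{Y > y} - P(Y > y)` gives
`Cov[X, 1{Y > y}] = E[X Z] = E[∫ (1{X > x} - 1{0 > x}) Z dx]`. Fubini applies because
`∫ |1{X > x} - 1{0 > x}| |Z| dx = |X| |Z|` is integrable, and after swapping, the `1{0 > x}` term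
drops out since `E[Z] = 0`, while `E[1{X > x} Z] = Cov[1{X > x}, 1{Y > y}]`.
-/

open MeasureTheory Set

/-- The kernel of the signed layer-cake formula `a = ∫ layer a x dx`. -/
noncomputable def layer (a x : ℝ) : ℝ :=
  (if a > x then 1 else 0) - (if (0 : ℝ) > x then 1 else 0)

lemma measurable_layer : Measurable (Function.uncurry layer) :=
  (measurable_const.ite (measurableSet_lt measurable_snd measurable_fst) measurable_const).sub
    (measurable_const.ite (measurableSet_lt measurable_snd measurable_const) measurable_const)

lemma layer_eq_indicator (a : ℝ) :
    layer a = (Ico 0 a).indicator 1 - (Ico a 0).indicator 1 := by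
  funext x
  simp only [layer, Pi.sub_apply, indicator_apply, mem_Ico, Pi.one_apply]
  split_ifs <;> grind

lemma abs_layer_eq_indicator (a x : ℝ) :
    |layer a x| = (Ico (min 0 a) (max 0 a)).indicator 1 x := by
  simp only [layer, indicator_apply, mem_Ico, Pi.one_apply, min_le_iff, lt_max_iff]
  split_ifs <;> grind

lemma integrable_indicator_one_Ico (a b : ℝ) :
    Integrable ((Ico a b).indicator (1 : ℝ → ℝ)) :=
  (integrableOn_const measure_Ico_lt_top.ne).integrable_indicator measurableSet_Ico

lemma integrable_layer (a : ℝ) : Integrable (layer a) := by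
  rw [layer_eq_indicator]
  exact (integrable_indicator_one_Ico 0 a).sub (integrable_indicator_one_Ico a 0)

lemma integral_layer (a : ℝ) : ∫ x, layer a x = a := by
  simp only [layer_eq_indicator, Pi.sub_apply]
  rw [integral_sub (integrable_indicator_one_Ico 0 a) (integrable_indicator_one_Ico a 0),
    integral_indicator_one measurableSet_Ico, integral_indicator_one measurableSet_Ico,
    Real.volume_real_Ico, Real.volume_real_Ico]
  rcases le_total 0 a with h | h <;> simp [h]

lemma integral_abs_layer (a : ℝ) : ∫ x, |layer a x| = |a| := by
  simp [abs_layer_eq_indicator, integral_indicator_one measurableSet_Ico, Real.volume_real_Ico,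
    max_sub_min_eq_abs]

section

variable {Ω : Type*} [MeasurableSpace Ω] {μ : Measure Ω}

theorem integral_mul_eq_integral_integral_layer_mul [SFinite μ] {X Z : Ω → ℝ}
    (hX : Measurable X) (hZ : Measurable Z) (hXZ : Integrable (fun ω => X ω * Z ω) μ) :
    ∫ ω, X ω * Z ω ∂μ = ∫ x, ∫ ω, layer (X ω) x * Z ω ∂μ := by
  have hmeas : Measurable (Function.uncurry fun ω x => layer (X ω) x * Z ω) :=
    (measurable_layer.comp ((hX.comp measurable_fst).prodMk measurable_snd)).mul
      (hZ.comp measurable_fst)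
  have hint : Integrable (Function.uncurry fun ω x => layer (X ω) x * Z ω) (μ.prod volume) := by
    rw [integrable_prod_iff hmeas.aestronglyMeasurable]
    refine ⟨ae_of_all _ fun ω => (integrable_layer (X ω)).mul_const (Z ω), ?_⟩
    simpa [abs_mul, integral_mul_const, integral_abs_layer] using hXZ.norm
  rw [← integral_integral_swap hint]
  simp_rw [integral_mul_const, integral_layer]

lemma integrable_boole_mul {Z : Ω → ℝ} {P : Ω → Prop} [DecidablePred P]
    (hP : MeasurableSet {ω | P ω}) (hZ : Integrable Z μ) :
    Integrable (fun ω => (if P ω then 1 else 0) * Z ω) μ :=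
  hZ.bdd_mul (measurable_const.ite hP measurable_const).aestronglyMeasurable
    (ae_of_all _ fun ω => by split_ifs <;> simp) (c := 1)

lemma integrable_boole [IsFiniteMeasure μ] {P : Ω → Prop} [DecidablePred P]
    (hP : MeasurableSet {ω | P ω}) : Integrable (fun ω => if P ω then (1 : ℝ) else 0) μ := by
  simpa using integrable_boole_mul hP (integrable_const (1 : ℝ))

theorem integral_mul_eq_integral_integral_boole_mul [SFinite μ] {X Z : Ω → ℝ}
    (hX : Measurable X) (hZ : Measurable Z) (hXZ : Integrable (fun ω => X ω * Z ω) μ)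
    (hZint : Integrable Z μ) (hZ0 : ∫ ω, Z ω ∂μ = 0) :
    ∫ ω, X ω * Z ω ∂μ = ∫ x, ∫ ω, (if X ω > x then 1 else 0) * Z ω ∂μ := by
  rw [integral_mul_eq_integral_integral_layer_mul hX hZ hXZ]
  refine integral_congr_ae (ae_of_all _ fun x => ?_)
  simp only [layer, sub_mul]
  rw [integral_sub (integrable_boole_mul (measurableSet_lt measurable_const hX) hZint)
    (hZint.const_mul _), integral_const_mul, hZ0, mul_zero, sub_zero]

lemma integral_mul_sub_const {V B : Ω → ℝ} (c : ℝ) (hV : Integrable V μ)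
    (hVB : Integrable (fun ω => V ω * B ω) μ) :
    ∫ ω, V ω * (B ω - c) ∂μ = ∫ ω, V ω * B ω ∂μ - (∫ ω, V ω ∂μ) * c := by
  simp only [mul_sub]
  rw [integral_sub hVB (hV.mul_const c), integral_mul_const]

end

/-- Hoeffding/Cuadras-type representation:
`Cov[X, 1{Y>y}] = ∫ Cov[1{X>x}, 1{Y>y}] dx`. -/
theorem cov_indicator_repr {Ω : Type*} [MeasurableSpace Ω]
    (μ : Measure Ω) [IsProbabilityMeasure μ]
    (X Y : Ω → ℝ) (hX : Measurable X) (hY : Measurable Y)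
    (hXint : Integrable X μ)
    (y : ℝ)
    (hprod : Integrable (fun ω => X ω * (if Y ω > y then (1:ℝ) else 0)) μ) :
    (∫ ω, X ω * (if Y ω > y then (1:ℝ) else 0) ∂μ)
      - (∫ ω, X ω ∂μ) * (∫ ω, (if Y ω > y then (1:ℝ) else 0) ∂μ)
    = ∫ x : ℝ,
        ((∫ ω, (if X ω > x then (1:ℝ) else 0) * (if Y ω > y then (1:ℝ) else 0) ∂μ)
          - (∫ ω, (if X ω > x then (1:ℝ) else 0) ∂μ)
            * (∫ ω, (if Y ω > y then (1:ℝ) else 0) ∂μ)) := by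
  set B : Ω → ℝ := fun ω => if Y ω > y then 1 else 0
  set p := ∫ ω, B ω ∂μ
  have hBmeas : MeasurableSet {ω | Y ω > y} := measurableSet_lt measurable_const hY
  have hB : Integrable B μ := integrable_boole hBmeas
  have hB_sub : ∫ ω, (B ω - p) ∂μ = 0 := by
    rw [integral_sub hB (integrable_const p)]
    simp [p]
  have hXB_sub : Integrable (fun ω => X ω * (B ω - p)) μ := by
    simp_rw [mul_sub]
    exact hprod.sub (hXint.mul_const p)
  rw [← integral_mul_sub_const p hXint hprod,
    integral_mul_eq_integral_integral_boole_mul hX ((measurable_const.ite hBmeas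
      measurable_const).sub_const p) hXB_sub (hB.sub (integrable_const p)) hB_sub]
  refine integral_congr_ae (ae_of_all _ fun x => ?_)
  have hXmeas : MeasurableSet {ω | X ω > x} := measurableSet_lt measurable_const hX
  exact integral_mul_sub_const p (integrable_boole hXmeas) (integrable_boole_mul hXmeas hB)
end

section
/- For α ∈ [0,1], the copula C_α = (1-α)C_FGM + α C_FU (with FGM parameter θ = -1) satisfies: C_α is NQDE if and only if α ≤ 1/4, and PQDE if and only if α ≥ 1/4. -/
/-! Integrating in `u` turns the defect `C_α(u,v) - uv` into `v(1-v)/2 · (4α-1)/3`: the FGM part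
contributes `v²/2 + v(1-v)/3` and `min u v` contributes `v - v²/2`. Since `v(1-v) ≥ 0` on `[0,1]`
and is positive at `v = 1/2`, the sign condition for all `v` is the sign of `4α - 1`. -/

open Set intervalIntegral

theorem integral_min_const {a b v : ℝ} (hav : a ≤ v) (hvb : v ≤ b) :
    ∫ u in a..b, min u v = (v ^ 2 - a ^ 2) / 2 + v * (b - v) := by
  have hc : Continuous fun u : ℝ => min u v := continuous_id.min continuous_const
  rw [← integral_add_adjacent_intervals (b := v) (hc.intervalIntegrable _ _)
    (hc.intervalIntegrable _ _)]
  have below : ∫ u in a..v, min u v = ∫ u in a..v, u :=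
    integral_congr fun u hu => min_eq_left (by rw [uIcc_of_le hav] at hu; exact hu.2)
  have above : ∫ u in v..b, min u v = ∫ u in v..b, v :=
    integral_congr fun u hu => min_eq_right (by rw [uIcc_of_le hvb] at hu; exact hu.1)
  rw [below, above, integral_id, integral_const, smul_eq_mul, mul_comm (b - v)]

theorem integral_fgm_copula (v : ℝ) :
    ∫ u in (0:ℝ)..1, u * v * (1 - (1 - u) * (1 - v)) = v ^ 2 / 2 + v * (1 - v) / 3 := by
  have expand : (fun u : ℝ => u * v * (1 - (1 - u) * (1 - v)))
      = fun u => v * (1 - v) * u ^ 2 + v ^ 2 * u := by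
    funext u; ring
  rw [expand, integral_add (Continuous.intervalIntegrable (by fun_prop) _ _)
    (Continuous.intervalIntegrable (by fun_prop) _ _), integral_const_mul,
    integral_const_mul, integral_pow, integral_id]
  ring

theorem integral_fgm_upper_mix_sub_mul (α : ℝ) {v : ℝ} (hv : v ∈ Icc (0:ℝ) 1) :
    ∫ u in (0:ℝ)..1,
        ((1 - α) * (u * v * (1 - (1 - u) * (1 - v))) + α * min u v - u * v)
      = v * (1 - v) / 2 * (4 / 3 * α - 1 / 3) := by
  have hFGM : IntervalIntegrable (fun u : ℝ => (1 - α) * (u * v * (1 - (1 - u) * (1 - v))))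
      MeasureTheory.volume 0 1 := Continuous.intervalIntegrable (by fun_prop) _ _
  have hFU : IntervalIntegrable (fun u : ℝ => α * min u v) MeasureTheory.volume 0 1 :=
    Continuous.intervalIntegrable (by fun_prop) _ _
  rw [integral_sub (hFGM.add hFU) (Continuous.intervalIntegrable (by fun_prop) _ _),
    integral_add hFGM hFU, integral_const_mul, integral_const_mul, integral_fgm_copula,
    integral_min_const hv.1 hv.2, integral_mul_const, integral_id]
  ring

theorem forall_Icc_mul_nonpos_iff (c : ℝ) :
    (∀ v ∈ Icc (0:ℝ) 1, v * (1 - v) / 2 * c ≤ 0) ↔ c ≤ 0 := by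
  refine ⟨fun h => by nlinarith [h (1 / 2) ⟨by norm_num, by norm_num⟩], fun hc v hv => ?_⟩
  have : 0 ≤ v * (1 - v) / 2 := by nlinarith [hv.1, hv.2]
  exact mul_nonpos_of_nonneg_of_nonpos this hc

theorem forall_Icc_mul_nonneg_iff (c : ℝ) :
    (∀ v ∈ Icc (0:ℝ) 1, 0 ≤ v * (1 - v) / 2 * c) ↔ 0 ≤ c := by
  simpa [← neg_mul_eq_mul_neg, neg_nonpos] using forall_Icc_mul_nonpos_iff (-c)

theorem fgm_mix_nqde_pqde_general (α : ℝ) :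
    ((∀ v ∈ Set.Icc (0:ℝ) 1,
        (∫ u in (0:ℝ)..1,
          ((1 - α) * (u * v * (1 - (1 - u) * (1 - v))) + α * min u v - u * v)) ≤ 0)
      ↔ α ≤ 1/4)
    ∧
    ((∀ v ∈ Set.Icc (0:ℝ) 1,
        0 ≤ (∫ u in (0:ℝ)..1,
          ((1 - α) * (u * v * (1 - (1 - u) * (1 - v))) + α * min u v - u * v)))
      ↔ 1/4 ≤ α) := by
  have nqde := forall_Icc_mul_nonpos_iff (4 / 3 * α - 1 / 3)
  have pqde := forall_Icc_mul_nonneg_iff (4 / 3 * α - 1 / 3)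
  constructor
  · rw [forall₂_congr fun v hv => by rw [integral_fgm_upper_mix_sub_mul α hv], nqde]
    constructor <;> intro h <;> linarith
  · rw [forall₂_congr fun v hv => by rw [integral_fgm_upper_mix_sub_mul α hv], pqde]
    constructor <;> intro h <;> linarith

/-- The FGM/Fréchet-upper convex combination is NQDE iff `α ≤ 1/4` and PQDE iff `α ≥ 1/4`. -/
theorem fgm_mix_nqde_pqde (α : ℝ) (hα : α ∈ Set.Icc (0:ℝ) 1) :
    ((∀ v ∈ Set.Icc (0:ℝ) 1,
        (∫ u in (0:ℝ)..1,
          ((1 - α) * (u * v * (1 - (1 - u) * (1 - v))) + α * min u v - u * v)) ≤ 0)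
      ↔ α ≤ 1/4)
    ∧
    ((∀ v ∈ Set.Icc (0:ℝ) 1,
        0 ≤ (∫ u in (0:ℝ)..1,
          ((1 - α) * (u * v * (1 - (1 - u) * (1 - v))) + α * min u v - u * v)))
      ↔ 1/4 ≤ α) :=
  fgm_mix_nqde_pqde_general α
end

section
/- (Edmundson–Madansky inequality) Let f : ℝ → ℝ be convex and X a random variable with a ≤ X ≤ A almost surely, a < A, with mean μ = E[X]. Then E[f(X)] ≤ ((A-μ)/(A-a))·f(a) + ((μ-a)/(A-a))·f(A). -/
/-!
Writing `x ∈ [a, A]` as the convex combination `((A - x) a + (x - a) A) / (A - a)`, convexity puts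
the graph of `f` on `[a, A]` below its chord. The chord is affine, so its expectation at `X` is its
value at `𝔼 X`; taking expectations of `f (X) ≤ chord (X)` gives the inequality.
-/

open MeasureTheory Set

theorem ConvexOn.le_chord {𝕜 β : Type*} [Field 𝕜] [LinearOrder 𝕜] [IsStrictOrderedRing 𝕜]
    [AddCommMonoid β] [PartialOrder β] [Module 𝕜 β] {s : Set 𝕜} {f : 𝕜 → β}
    (hf : ConvexOn 𝕜 s f) {a b x : 𝕜} (ha : a ∈ s) (hb : b ∈ s) (hab : a < b)
    (hx : x ∈ Icc a b) :
    f x ≤ ((b - x) / (b - a)) • f a + ((x - a) / (b - a)) • f b := by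
  have hba : 0 < b - a := sub_pos.2 hab
  have hx_eq : ((b - x) / (b - a)) • a + ((x - a) / (b - a)) • b = x := by
    simp only [smul_eq_mul]
    field_simp
    ring
  have hweights : (b - x) / (b - a) + (x - a) / (b - a) = 1 := by
    field_simp
    ring
  calc f x = f (((b - x) / (b - a)) • a + ((x - a) / (b - a)) • b) := by rw [hx_eq]
    _ ≤ _ := hf.2 ha hb (div_nonneg (sub_nonneg.2 hx.2) hba.le)
        (div_nonneg (sub_nonneg.2 hx.1) hba.le) hweights

theorem integral_comp_le_of_le_affine {Ω : Type*} [MeasurableSpace Ω] {μ : Measure Ω}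
    [IsProbabilityMeasure μ] {X : Ω → ℝ} {f : ℝ → ℝ} {s : Set ℝ} {c d : ℝ}
    (hle : ∀ x ∈ s, f x ≤ c + d * x) (hX : ∀ᵐ ω ∂μ, X ω ∈ s)
    (hXint : Integrable X μ) (hfX : Integrable (fun ω => f (X ω)) μ) :
    ∫ ω, f (X ω) ∂μ ≤ c + d * ∫ ω, X ω ∂μ := by
  have haffine : Integrable (fun ω => c + d * X ω) μ := (integrable_const c).add (hXint.const_mul d)
  calc ∫ ω, f (X ω) ∂μ ≤ ∫ ω, (c + d * X ω) ∂μ :=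
        integral_mono_ae hfX haffine (hX.mono fun ω hω => hle _ hω)
    _ = c + d * ∫ ω, X ω ∂μ := by
        rw [integral_add (integrable_const c) (hXint.const_mul d), integral_const_mul]
        simp

/-- Edmundson–Madansky inequality. -/
theorem edmundson_madansky {Ω : Type*} [MeasurableSpace Ω]
    (μ : Measure Ω) [IsProbabilityMeasure μ]
    (a A : ℝ) (haA : a < A)
    (f : ℝ → ℝ) (hf : ConvexOn ℝ (Set.Icc a A) f)
    (X : Ω → ℝ)
    (hX : ∀ᵐ ω ∂μ, X ω ∈ Set.Icc a A)
    (hXint : Integrable X μ) (hfX : Integrable (fun ω => f (X ω)) μ) :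
    (∫ ω, f (X ω) ∂μ)
      ≤ ((A - ∫ ω, X ω ∂μ) / (A - a)) * f a + (((∫ ω, X ω ∂μ) - a) / (A - a)) * f A := by
  have hAa : A - a ≠ 0 := sub_ne_zero.2 haA.ne'
  have hchord : ∀ x ∈ Icc a A,
      f x ≤ (A * f a - a * f A) / (A - a) + (f A - f a) / (A - a) * x := fun x hx =>
    (hf.le_chord (left_mem_Icc.2 haA.le) (right_mem_Icc.2 haA.le) haA hx).trans_eq <| by
      simp only [smul_eq_mul]
      field_simp
      ring
  refine (integral_comp_le_of_le_affine hchord hX hXint hfX).trans_eq ?_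
  field_simp
  ring
end

section
/- Let X be a random variable with a ≤ X ≤ A almost surely (a < A), mean μ, and let p ≥ 1. Then E[|X-μ|^p] ≤ (A-a)^p · κ_p((μ-a)/(A-a)), where κ_p(x) = x(1-x)^p + (1-x)x^p. -/
open MeasureTheory

noncomputable def kappa (p x : ℝ) : ℝ := x * (1 - x) ^ p + (1 - x) * x ^ p

/-!
On `[a, A]` the convex function `t ↦ |t - μ| ^ p` lies below its chord, and the chord is affine,
so its expectation only depends on `E[X] = μ`: this is the Edmundson–Madansky inequality.
Evaluating the chord at `μ` gives `(A - a) ^ p κ_p((μ - a) / (A - a))`.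
-/

open Set

theorem convexOn_abs_sub_rpow (m : ℝ) {p : ℝ} (hp : 1 ≤ p) :
    ConvexOn ℝ univ fun t : ℝ => |t - m| ^ p := by
  have himage : (fun t : ℝ => |t - m|) '' univ = Ici 0 := by
    ext y
    refine ⟨fun ⟨t, _, ht⟩ => ht ▸ mem_Ici.2 (abs_nonneg _), fun hy => ⟨m + y, mem_univ _, ?_⟩⟩
    simpa using abs_of_nonneg (mem_Ici.1 hy)
  have habs : ConvexOn ℝ univ fun t : ℝ => |t - m| := by
    simpa only [Real.dist_eq] using convexOn_univ_dist m
  refine ConvexOn.comp (g := fun x : ℝ => x ^ p) ?_ habs ?_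
  · rw [himage]; exact convexOn_rpow hp
  · rw [himage]; exact Real.monotoneOn_rpow_Ici_of_exponent_nonneg (by linarith)

theorem ConvexOn.le_chord_of_mem_Icc {f : ℝ → ℝ} {a b x : ℝ} (hf : ConvexOn ℝ (Icc a b) f)
    (hab : a < b) (hx : x ∈ Icc a b) :
    f x ≤ ((b - x) * f a + (x - a) * f b) / (b - a) := by
  have hba : 0 < b - a := sub_pos.2 hab
  have key := hf.2 (left_mem_Icc.2 hab.le) (right_mem_Icc.2 hab.le)
    (div_nonneg (sub_nonneg.2 hx.2) hba.le) (div_nonneg (sub_nonneg.2 hx.1) hba.le)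
    (by field_simp; ring)
  have hcomb : ((b - x) / (b - a)) • a + ((x - a) / (b - a)) • b = x := by
    simp only [smul_eq_mul]; field_simp; ring
  rw [hcomb, smul_eq_mul, smul_eq_mul] at key
  exact key.trans_eq (by field_simp)

theorem ConvexOn.integral_comp_le_of_mem_Icc {Ω : Type*} [MeasurableSpace Ω] {μ : Measure Ω}
    [IsProbabilityMeasure μ] {f : ℝ → ℝ} {a b : ℝ} {X : Ω → ℝ} (hf : ConvexOn ℝ (Icc a b) f)
    (hab : a < b) (hX : ∀ᵐ ω ∂μ, X ω ∈ Icc a b) (hXint : Integrable X μ)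
    (hfX : Integrable (fun ω => f (X ω)) μ) :
    ∫ ω, f (X ω) ∂μ ≤ ((b - ∫ ω, X ω ∂μ) * f a + ((∫ ω, X ω ∂μ) - a) * f b) / (b - a) := by
  have hba : b - a ≠ 0 := (sub_pos.2 hab).ne'
  set slope := (f b - f a) / (b - a)
  set intercept := (b * f a - a * f b) / (b - a)
  have hchord : ∀ x, ((b - x) * f a + (x - a) * f b) / (b - a) = slope * x + intercept := by
    intro x; simp only [slope, intercept]; field_simp; ring
  calc ∫ ω, f (X ω) ∂μ ≤ ∫ ω, (slope * X ω + intercept) ∂μ :=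
        integral_mono_ae hfX ((hXint.const_mul slope).add (integrable_const intercept))
          (hX.mono fun ω hω => (hf.le_chord_of_mem_Icc hab hω).trans_eq (hchord _))
    _ = slope * (∫ ω, X ω ∂μ) + intercept := by
        rw [integral_add (hXint.const_mul slope) (integrable_const intercept),
          integral_const_mul, integral_const, probReal_univ, one_smul]
    _ = _ := (hchord _).symm

theorem sub_rpow_mul_kappa_div {a b m p : ℝ} (hab : a < b) (hm : m ∈ Icc a b) :
    (b - a) ^ p * kappa p ((m - a) / (b - a)) =
      ((b - m) * |a - m| ^ p + (m - a) * |b - m| ^ p) / (b - a) := by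
  have hba : 0 < b - a := sub_pos.2 hab
  have hma : 0 ≤ m - a := sub_nonneg.2 hm.1
  have hbm : 0 ≤ b - m := sub_nonneg.2 hm.2
  have hone : 1 - (m - a) / (b - a) = (b - m) / (b - a) := by field_simp; ring
  rw [kappa, hone, Real.div_rpow hma hba.le, Real.div_rpow hbm hba.le, abs_sub_comm,
    abs_of_nonneg hma, abs_of_nonneg hbm]
  have hpow : (b - a) ^ p ≠ 0 := (Real.rpow_pos_of_pos hba p).ne'
  field_simp
  ring

/-- Central-moment bound: `E[|X-μ|^p] ≤ (A-a)^p κ_p((μ-a)/(A-a))`. -/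
theorem central_moment_kappa_bound {Ω : Type*} [MeasurableSpace Ω]
    (μ : Measure Ω) [IsProbabilityMeasure μ]
    (a A : ℝ) (haA : a < A) (p : ℝ) (hp : 1 ≤ p)
    (X : Ω → ℝ) (hX : ∀ᵐ ω ∂μ, X ω ∈ Set.Icc a A)
    (hXint : Integrable X μ)
    (hmom : Integrable (fun ω => |X ω - ∫ ω', X ω' ∂μ| ^ p) μ) :
    (∫ ω, |X ω - ∫ ω', X ω' ∂μ| ^ p ∂μ)
      ≤ (A - a) ^ p * kappa p (((∫ ω, X ω ∂μ) - a) / (A - a)) := by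
  have hmean : ∫ ω, X ω ∂μ ∈ Icc a A := (convex_Icc a A).integral_mem isClosed_Icc hX hXint
  have hconv := (convexOn_abs_sub_rpow (∫ ω, X ω ∂μ) hp).subset (subset_univ _) (convex_Icc a A)
  rw [sub_rpow_mul_kappa_div haA hmean]
  exact hconv.integral_comp_le_of_mem_Icc haA hX hXint hmom
end

section
/- The bound E[|X-μ|^p] ≤ (A-a)^p κ_p((μ-a)/(A-a)) is attained: if X takes the value a with probability (A-μ)/(A-a) and the value A with probability (μ-a)/(A-a), then E[|X-μ|^p] = (A-a)^p κ_p((μ-a)/(A-a)). -/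
open MeasureTheory

/-! A two-valued random variable has an explicit law, so the central moment is a two-term sum;
with `x = (m - a) / (A - a)` its weights are `1 - x` and `x` and its values are `(x (A - a))^p`
and `((1 - x) (A - a))^p`, which is `(A - a)^p κ_p(x)`. -/

theorem integral_comp_of_ae_eq_or_eq {Ω α E : Type*} [MeasurableSpace Ω] [MeasurableSpace α]
    [MeasurableSingletonClass α] [NormedAddCommGroup E] [NormedSpace ℝ E] [CompleteSpace E]
    (μ : Measure Ω) [IsFiniteMeasure μ] {X : Ω → α} (hX : Measurable X) {a b : α} (hab : a ≠ b)
    (hsupp : ∀ᵐ ω ∂μ, X ω = a ∨ X ω = b) (f : α → E) :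
    ∫ ω, f (X ω) ∂μ = μ.real {ω | X ω = a} • f a + μ.real {ω | X ω = b} • f b := by
  have hsa : MeasurableSet {ω | X ω = a} := hX (measurableSet_singleton a)
  have hsb : MeasurableSet {ω | X ω = b} := hX (measurableSet_singleton b)
  have hae : (fun ω => f (X ω)) =ᵐ[μ]
      {ω | X ω = a}.indicator (fun _ => f a) + {ω | X ω = b}.indicator (fun _ => f b) := by
    filter_upwards [hsupp] with ω hω
    rcases hω with h | h
    · simp [Set.indicator, h, hab]
    · simp [Set.indicator, h, hab.symm]
  rw [integral_congr_ae hae, Pi.add_def, integral_add ((integrable_const _).indicator hsa)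
    ((integrable_const _).indicator hsb), integral_indicator_const _ hsa,
    integral_indicator_const _ hsb]

theorem add_rpow_mul_kappa_div {s t : ℝ} (hs : 0 ≤ s) (ht : 0 ≤ t) (hst : 0 < s + t) (p : ℝ) :
    (s + t) ^ p * kappa p (s / (s + t)) = t / (s + t) * s ^ p + s / (s + t) * t ^ p := by
  have hcompl : 1 - s / (s + t) = t / (s + t) := by field_simp; ring
  rw [kappa, hcompl, Real.div_rpow ht hst.le, Real.div_rpow hs hst.le]
  field_simp
  ring

theorem central_moment_kappa_bound_sharp_general {Ω : Type*} [MeasurableSpace Ω]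
    (μ : Measure Ω) [IsProbabilityMeasure μ]
    (a A m : ℝ) (haA : a < A) (hm : m ∈ Set.Icc a A) (p : ℝ)
    (X : Ω → ℝ) (hXmeas : Measurable X)
    (ha : μ {ω | X ω = a} = ENNReal.ofReal ((A - m) / (A - a)))
    (hA : μ {ω | X ω = A} = ENNReal.ofReal ((m - a) / (A - a)))
    (hsupp : ∀ᵐ ω ∂μ, X ω = a ∨ X ω = A) :
    (∫ ω, |X ω - m| ^ p ∂μ) = (A - a) ^ p * kappa p ((m - a) / (A - a)) := by
  obtain ⟨hma, hmA⟩ := hm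
  have hAa : 0 < A - a := sub_pos.mpr haA
  have hsum : (m - a) + (A - m) = A - a := by ring
  rw [integral_comp_of_ae_eq_or_eq μ hXmeas haA.ne hsupp (fun x => |x - m| ^ p),
    measureReal_def, measureReal_def, ha, hA,
    ENNReal.toReal_ofReal (div_nonneg (sub_nonneg.mpr hmA) hAa.le),
    ENNReal.toReal_ofReal (div_nonneg (sub_nonneg.mpr hma) hAa.le),
    abs_of_nonpos (sub_nonpos.mpr hma), abs_of_nonneg (sub_nonneg.mpr hmA), neg_sub, ← hsum,
    add_rpow_mul_kappa_div (sub_nonneg.mpr hma) (sub_nonneg.mpr hmA) (hsum ▸ hAa),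
    smul_eq_mul, smul_eq_mul]

/-- The central-moment bound is attained by the two-point distribution on `{a, A}`
with mean `m`. -/
theorem central_moment_kappa_bound_sharp {Ω : Type*} [MeasurableSpace Ω]
    (μ : Measure Ω) [IsProbabilityMeasure μ]
    (a A m : ℝ) (haA : a < A) (hm : m ∈ Set.Icc a A) (p : ℝ) (hp : 1 ≤ p)
    (X : Ω → ℝ) (hXmeas : Measurable X)
    (ha : μ {ω | X ω = a} = ENNReal.ofReal ((A - m) / (A - a)))
    (hA : μ {ω | X ω = A} = ENNReal.ofReal ((m - a) / (A - a)))
    (hsupp : ∀ᵐ ω ∂μ, X ω = a ∨ X ω = A) :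
    (∫ ω, |X ω - m| ^ p ∂μ) = (A - a) ^ p * kappa p ((m - a) / (A - a)) :=
  central_moment_kappa_bound_sharp_general μ a A m haA hm p X hXmeas ha hA hsupp
end

section
/- For every p ≥ 1, the maximum K_p = sup_{x∈[0,1]} κ_p(x) of κ_p(x) = x(1-x)^p + (1-x)x^p satisfies (1/(p+1))(p/(p+1))^p ≤ K_p ≤ (1/(p+1))(p/(p+1))^p + 2^{-(1+p)}. -/
noncomputable def Kmax (p : ℝ) : ℝ := sSup (kappa p '' Set.Icc (0:ℝ) 1)

open Real

theorem one_sub_one_div_add_one {p : ℝ} (hp : p + 1 ≠ 0) : 1 - 1 / (p + 1) = p / (1 + p) := by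
  rw [add_comm 1 p]; field_simp; ring

theorem mul_one_sub_rpow_le {p x : ℝ} (hp : 0 < p) (hx0 : 0 ≤ x) (hx1 : x ≤ 1) :
    x * (1 - x) ^ p ≤ 1 / (p + 1) * (1 - 1 / (p + 1)) ^ p := by
  set x₀ := 1 / (p + 1) with hx₀_def
  have hx₀ : 0 < x₀ := by positivity
  have hy₀ : 0 < 1 - x₀ := by
    rw [hx₀_def, sub_pos, div_lt_one (by positivity)]; linarith
  have hy : 0 ≤ 1 - x := sub_nonneg.mpr hx1
  have amgm : (x / x₀) ^ x₀ * ((1 - x) / (1 - x₀)) ^ (1 - x₀) ≤ 1 := by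
    have h := geom_mean_le_arith_mean2_weighted hx₀.le hy₀.le (div_nonneg hx0 hx₀.le)
      (div_nonneg hy hy₀.le) (add_sub_cancel x₀ 1)
    rwa [mul_div_cancel₀ _ hx₀.ne', mul_div_cancel₀ _ hy₀.ne', add_sub_cancel] at h
  have hexp₁ : x₀ * (p + 1) = 1 := by rw [hx₀_def]; field_simp
  have hexp₂ : (1 - x₀) * (p + 1) = p := by rw [sub_mul, hexp₁]; ring
  have key : (x / x₀) * ((1 - x) / (1 - x₀)) ^ p ≤ 1 := by
    have h := rpow_le_rpow (by positivity) amgm (by linarith : 0 ≤ p + 1)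
    rwa [mul_rpow (by positivity) (by positivity), ← rpow_mul (by positivity),
      ← rpow_mul (by positivity), hexp₁, hexp₂, rpow_one, one_rpow] at h
  rwa [div_rpow hy hy₀.le, div_mul_div_comm, div_le_one (by positivity)] at key

theorem one_sub_mul_rpow_le {p x : ℝ} (hp : 1 ≤ p) (hx0 : 0 ≤ x) (hx : x ≤ 1 / 2) :
    (1 - x) * x ^ p ≤ 1 / 2 ^ (1 + p) := by
  have hsplit : x ^ p = x * x ^ (p - 1) := by
    rw [← rpow_one_add' hx0 (by linarith), add_sub_cancel]
  have hquad : (1 - x) * x ≤ 1 / 4 := by nlinarith [sq_nonneg (x - 1 / 2)]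
  have hmono : x ^ (p - 1) ≤ (1 / 2) ^ (p - 1) := rpow_le_rpow hx0 hx (by linarith)
  calc (1 - x) * x ^ p = ((1 - x) * x) * x ^ (p - 1) := by rw [hsplit]; ring
    _ ≤ 1 / 4 * (1 / 2) ^ (p - 1) :=
        mul_le_mul hquad hmono (rpow_nonneg hx0 _) (by norm_num)
    _ = 1 / 2 ^ (1 + p) := by
        rw [div_rpow zero_le_one zero_le_two, one_rpow, div_mul_div_comm, one_mul,
          show (4 : ℝ) = 2 ^ (2 : ℝ) by norm_num, ← rpow_add zero_lt_two]
        ring_nf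

theorem kappa_one_sub (p x : ℝ) : kappa p (1 - x) = kappa p x := by
  simp only [kappa, sub_sub_cancel]; ring

theorem kappa_le {p x : ℝ} (hp : 1 ≤ p) (hx0 : 0 ≤ x) (hx1 : x ≤ 1) :
    kappa p x ≤ 1 / (p + 1) * (p / (1 + p)) ^ p + 1 / 2 ^ (1 + p) := by
  wlog hx : x ≤ 1 / 2 generalizing x
  · rw [← kappa_one_sub]
    exact this (by linarith) (by linarith) (by linarith)
  have h₁ := mul_one_sub_rpow_le (by linarith : (0 : ℝ) < p) hx0 hx1
  have h₂ := one_sub_mul_rpow_le hp hx0 hx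
  rw [one_sub_one_div_add_one (by linarith)] at h₁
  unfold kappa
  linarith

/-- Sandwich bounds for `K_p = sup_{x∈[0,1]} κ_p(x)`. -/
theorem Kmax_bounds (p : ℝ) (hp : 1 ≤ p) :
    (1 / (p + 1)) * (p / (1 + p)) ^ p ≤ Kmax p ∧
    Kmax p ≤ (1 / (p + 1)) * (p / (1 + p)) ^ p + 1 / 2 ^ (1 + p) := by
  have hbound : ∀ y ∈ kappa p '' Set.Icc 0 1,
      y ≤ 1 / (p + 1) * (p / (1 + p)) ^ p + 1 / 2 ^ (1 + p) := by
    rintro _ ⟨x, hx, rfl⟩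
    exact kappa_le hp hx.1 hx.2
  have hx₀ : 1 / (p + 1) ∈ Set.Icc (0 : ℝ) 1 :=
    ⟨by positivity, by rw [div_le_one (by linarith)]; linarith⟩
  refine ⟨?_, csSup_le ⟨_, Set.mem_image_of_mem _ hx₀⟩ hbound⟩
  calc 1 / (p + 1) * (p / (1 + p)) ^ p
      ≤ kappa p (1 / (p + 1)) := by
        rw [kappa, one_sub_one_div_add_one (by linarith), le_add_iff_nonneg_right]
        exact mul_nonneg (by positivity) (rpow_nonneg hx₀.1 _)
    _ ≤ Kmax p := le_csSup ⟨_, hbound⟩ (Set.mem_image_of_mem _ hx₀)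
end

section
/- For 1 ≤ p ≤ 3, the function κ_p(x) = x(1-x)^p + (1-x)x^p on [0,1] attains its maximum at x = 1/2, so K_p = 2^{-p}. -/
/-- Midpoint concavity of `t ↦ t ^ r` for `0 ≤ r ≤ 1`. -/
lemma rpow_midpoint {u v r : ℝ} (hu : 0 ≤ u) (hv : 0 ≤ v) (hr : 0 ≤ r) (hr1 : r ≤ 1) :
    u ^ r + v ^ r ≤ 2 * ((u + v) / 2) ^ r := by
  have h := (Real.concaveOn_rpow hr hr1).2 (Set.mem_Ici.mpr hu) (Set.mem_Ici.mpr hv)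
    (by norm_num : (0:ℝ) ≤ 1/2) (by norm_num : (0:ℝ) ≤ 1/2) (by norm_num)
  have h' : (1/2 : ℝ) * u ^ r + (1/2 : ℝ) * v ^ r ≤ ((1/2) * u + (1/2) * v) ^ r := h
  have h2 : ((1/2 : ℝ) * u + (1/2) * v) = (u + v) / 2 := by ring
  rw [h2] at h'
  linarith

/-- Core inequality: if `a + b = 2` with `a, b ≥ 0` and `1 ≤ p ≤ 3`, then
`a * b^p + b * a^p ≤ 2`. -/
lemma core_ineq {a b p : ℝ} (ha : 0 ≤ a) (hb : 0 ≤ b) (hab : a + b = 2)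
    (hp : 1 ≤ p) (hp3 : p ≤ 3) : a * b ^ p + b * a ^ p ≤ 2 := by
  have hp0 : p ≠ 0 := by linarith
  rcases eq_or_lt_of_le ha with rfl | ha'
  · simp [Real.zero_rpow hp0]
  rcases eq_or_lt_of_le hb with rfl | hb'
  · simp [Real.zero_rpow hp0]
  -- a, b > 0
  set q := p - 1 with hq
  have hq0 : 0 ≤ q := by simp only [hq]; linarith
  have hq2 : q ≤ 2 := by simp only [hq]; linarith
  have hbp : b ^ p = b * b ^ q := by
    have h := Real.rpow_add hb' 1 q
    rw [Real.rpow_one] at h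
    rw [show p = 1 + q by rw [hq]; ring, h]
  have hap : a ^ p = a * a ^ q := by
    have h := Real.rpow_add ha' 1 q
    rw [Real.rpow_one] at h
    rw [show p = 1 + q by rw [hq]; ring, h]
  have key : a * b ^ p + b * a ^ p = a * b * (a ^ q + b ^ q) := by
    rw [hbp, hap]; ring
  rw [key]
  have ha2 : a ^ q = (a ^ 2) ^ (q / 2) := by
    rw [← Real.rpow_natCast a 2, ← Real.rpow_mul ha]
    congr 1; push_cast; ring
  have hb2 : b ^ q = (b ^ 2) ^ (q / 2) := by
    rw [← Real.rpow_natCast b 2, ← Real.rpow_mul hb]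
    congr 1; push_cast; ring
  have hmid : a ^ q + b ^ q ≤ 2 * ((a ^ 2 + b ^ 2) / 2) ^ (q / 2) := by
    rw [ha2, hb2]
    exact rpow_midpoint (by positivity) (by positivity) (by linarith) (by linarith)
  have habmul : a * b ≤ 1 := by nlinarith [sq_nonneg (a - b)]
  have hm : (a ^ 2 + b ^ 2) / 2 = 2 - a * b := by
    linear_combination ((a + b + 2) / 2) * hab
  have hm1 : (1:ℝ) ≤ (a ^ 2 + b ^ 2) / 2 := by rw [hm]; linarith
  have hle : ((a ^ 2 + b ^ 2) / 2) ^ (q / 2) ≤ (a ^ 2 + b ^ 2) / 2 := by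
    calc ((a ^ 2 + b ^ 2) / 2) ^ (q / 2) ≤ ((a ^ 2 + b ^ 2) / 2) ^ (1:ℝ) :=
          Real.rpow_le_rpow_of_exponent_le hm1 (by linarith)
      _ = (a ^ 2 + b ^ 2) / 2 := Real.rpow_one _
  have hab0 : 0 ≤ a * b := by positivity
  calc a * b * (a ^ q + b ^ q) ≤ a * b * (2 * ((a ^ 2 + b ^ 2) / 2)) := by
        have h := hmid.trans
          (by linarith : 2 * ((a ^ 2 + b ^ 2) / 2) ^ (q / 2) ≤ 2 * ((a ^ 2 + b ^ 2) / 2))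
        exact mul_le_mul_of_nonneg_left h hab0
    _ = a * b * (2 * (2 - a * b)) := by rw [hm]
    _ ≤ 2 := by nlinarith [sq_nonneg (a * b - 1)]

lemma kappa_le_s14 {p : ℝ} (hp : 1 ≤ p) (hp3 : p ≤ 3) {x : ℝ} (hx : x ∈ Set.Icc (0:ℝ) 1) :
    kappa p x ≤ 2 ^ (-p) := by
  obtain ⟨hx0, hx1⟩ := hx
  have ha : (0:ℝ) ≤ 2 * x := by linarith
  have hb : (0:ℝ) ≤ 2 * (1 - x) := by linarith
  have hcore := core_ineq ha hb (by ring) hp hp3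
  have e1 : (2 * (1 - x)) ^ p = 2 ^ p * (1 - x) ^ p := Real.mul_rpow (by norm_num) (by linarith)
  have e2 : (2 * x) ^ p = 2 ^ p * x ^ p := Real.mul_rpow (by norm_num) hx0
  rw [e1, e2] at hcore
  have hpow : (0:ℝ) < 2 ^ p := Real.rpow_pos_of_pos (by norm_num) p
  have hneg : (2:ℝ) ^ (-p) = (2 ^ p)⁻¹ := Real.rpow_neg (by norm_num) p
  have hk : (2:ℝ) ^ p * (2 * (x * (1 - x) ^ p + (1 - x) * x ^ p)) ≤ 2 := by
    calc (2:ℝ) ^ p * (2 * (x * (1 - x) ^ p + (1 - x) * x ^ p))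
        = 2 * x * (2 ^ p * (1 - x) ^ p) + 2 * (1 - x) * (2 ^ p * x ^ p) := by ring
      _ ≤ 2 := hcore
  simp only [kappa]
  rw [hneg, inv_eq_one_div, le_div_iff₀ hpow]
  nlinarith [hk]

/-- For `1 ≤ p ≤ 3`, `κ_p` attains its maximum on `[0,1]` at `x = 1/2`,
so `K_p = 2^{-p}`. -/
theorem Kmax_small_p (p : ℝ) (hp : 1 ≤ p) (hp3 : p ≤ 3) :
    (∀ x ∈ Set.Icc (0:ℝ) 1, kappa p x ≤ kappa p (1/2)) ∧ Kmax p = 2 ^ (-p) := by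
  have hhalf : kappa p (1/2) = 2 ^ (-p) := by
    simp only [kappa]
    have h1 : ((1:ℝ) - 1/2) = 1/2 := by norm_num
    rw [h1]
    have h12 : ((1:ℝ)/2) ^ p = 2 ^ (-p) := by
      rw [show ((1:ℝ)/2) = 2⁻¹ by norm_num, Real.inv_rpow (by norm_num : (0:ℝ) ≤ 2),
        ← Real.rpow_neg (by norm_num : (0:ℝ) ≤ 2)]
    rw [h12]; ring
  constructor
  · intro x hx
    rw [hhalf]
    exact kappa_le_s14 hp hp3 hx
  · rw [Kmax]
    apply IsGreatest.csSup_eq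
    constructor
    · exact ⟨1/2, by constructor <;> norm_num, hhalf⟩
    · rintro y ⟨x, hx, rfl⟩
      exact kappa_le_s14 hp hp3 hx
end
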